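/- arXiv:quant-ph/0305005 — 11 statements merged into one kernel-verified Lean document; each statement's English description precedes it below -/
import Mathlib

section
/- Let C be a convex cone that is the convex hull of two subcones C₁ and C₂. If F is a face of C, then F ∩ C₁ is a face of C₁, F ∩ C₂ is a face of C₂, and F equals the convex hull of (F ∩ C₁) ∪ (F ∩ C₂). -/
open BigOperators

noncomputable section

variable {E : Type*} [AddCommGroup E] [Module ℝ E]

/-- `F` is a face of the convex set `C`: a convex subset of `C` such that whenever a point
of `F` is a nontrivial convex combination of two points of `C`, both points lie in `F`. -/
def IsFaceOf (F C : Set E) : Prop :=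
  F ⊆ C ∧ Convex ℝ F ∧
    ∀ x ∈ C, ∀ y ∈ C, ∀ t : ℝ, 0 < t → t < 1 →
      t • x + (1 - t) • y ∈ F → x ∈ F ∧ y ∈ F

/-!
The convex hull of two nonempty convex sets is their join, so every point `z` of a face `F` of
`conv (C₁ ∪ C₂)` lies in `C₁`, in `C₂`, or in the open segment between some `x ∈ C₁` and
`y ∈ C₂`. In the last case the face property puts `x` and `y` in `F`, hence `z` lies on a segment
between a point of `F ∩ C₁` and a point of `F ∩ C₂`.
-/

theorem Convex.mem_or_mem_or_mem_openSegment_of_mem_convexHull_union {s t : Set E}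
    (hs : Convex ℝ s) (ht : Convex ℝ t) {z : E} (hz : z ∈ convexHull ℝ (s ∪ t)) :
    z ∈ s ∨ z ∈ t ∨ ∃ x ∈ s, ∃ y ∈ t, z ∈ openSegment ℝ x y := by
  rcases s.eq_empty_or_nonempty with rfl | hs₀
  · rw [Set.empty_union, ht.convexHull_eq] at hz
    exact Or.inr (Or.inl hz)
  rcases t.eq_empty_or_nonempty with rfl | ht₀
  · rw [Set.union_empty, hs.convexHull_eq] at hz
    exact Or.inl hz
  rw [hs.convexHull_union ht hs₀ ht₀, mem_convexJoin] at hz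
  obtain ⟨x, hx, y, hy, hxy⟩ := hz
  rw [← insert_endpoints_openSegment] at hxy
  rcases hxy with rfl | rfl | hxy
  · exact Or.inl hx
  · exact Or.inr (Or.inl hy)
  · exact Or.inr (Or.inr ⟨x, hx, y, hy, hxy⟩)

namespace IsFaceOf

variable {F C D : Set E}

theorem isExtreme (hF : IsFaceOf F C) : IsExtreme ℝ C F := by
  refine ⟨hF.1, ?_⟩
  rintro x hx y hy z hz ⟨a, b, ha, hb, hab, rfl⟩
  obtain rfl : b = 1 - a := by linarith
  exact (hF.2.2 x hx y hy a ha (by linarith) hz).1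

theorem inter_of_subset (hF : IsFaceOf F C) (hD : Convex ℝ D) (hDC : D ⊆ C) :
    IsFaceOf (F ∩ D) D := by
  refine ⟨Set.inter_subset_right, hF.2.1.inter hD, ?_⟩
  intro x hx y hy t ht₀ ht₁ hxy
  obtain ⟨hxF, hyF⟩ := hF.2.2 x (hDC hx) y (hDC hy) t ht₀ ht₁ hxy.1
  exact ⟨⟨hxF, hx⟩, ⟨hyF, hy⟩⟩

theorem eq_convexHull_inter_union_inter {C₁ C₂ : Set E} (hC₁ : Convex ℝ C₁) (hC₂ : Convex ℝ C₂)
    (hF : IsFaceOf F (convexHull ℝ (C₁ ∪ C₂))) :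
    F = convexHull ℝ ((F ∩ C₁) ∪ (F ∩ C₂)) := by
  refine subset_antisymm (fun z hz => ?_)
    (convexHull_min (Set.union_subset Set.inter_subset_left Set.inter_subset_left) hF.2.1)
  have hC : C₁ ∪ C₂ ⊆ convexHull ℝ (C₁ ∪ C₂) := subset_convexHull ℝ _
  rcases hC₁.mem_or_mem_or_mem_openSegment_of_mem_convexHull_union hC₂ (hF.1 hz) with
    hz₁ | hz₂ | ⟨x, hx, y, hy, hzxy⟩
  · exact subset_convexHull ℝ _ (Or.inl ⟨hz, hz₁⟩)
  · exact subset_convexHull ℝ _ (Or.inr ⟨hz, hz₂⟩)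
  · have hxF := hF.isExtreme.left_mem_of_mem_openSegment (hC (.inl hx)) (hC (.inr hy)) hz hzxy
    have hyF := hF.isExtreme.right_mem_of_mem_openSegment (hC (.inl hx)) (hC (.inr hy)) hz hzxy
    exact segment_subset_convexHull (s := F ∩ C₁ ∪ F ∩ C₂) (.inl ⟨hxF, hx⟩) (.inr ⟨hyF, hy⟩)
      (openSegment_subset_segment ℝ x y hzxy)

end IsFaceOf

theorem stmt_3_general (C₁ C₂ F : Set E)
    (hC₁ : Convex ℝ C₁)
    (hC₂ : Convex ℝ C₂)
    (hF : IsFaceOf F (convexHull ℝ (C₁ ∪ C₂))) :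
    IsFaceOf (F ∩ C₁) C₁ ∧ IsFaceOf (F ∩ C₂) C₂ ∧
      F = convexHull ℝ ((F ∩ C₁) ∪ (F ∩ C₂)) :=
  ⟨hF.inter_of_subset hC₁ (Set.subset_union_left.trans (subset_convexHull ℝ _)),
    hF.inter_of_subset hC₂ (Set.subset_union_right.trans (subset_convexHull ℝ _)),
    hF.eq_convexHull_inter_union_inter hC₁ hC₂⟩

/-- if `C` is the convex hull of two convex cones `C₁`, `C₂` and `F` is a face
of `C`, then `F ∩ C₁` is a face of `C₁`, `F ∩ C₂` is a face of `C₂`, and `F` is the convex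
hull of `(F ∩ C₁) ∪ (F ∩ C₂)`. -/
theorem stmt_3 (C₁ C₂ F : Set E)
    (hC₁ : Convex ℝ C₁) (hC₁cone : ∀ r : ℝ, 0 < r → ∀ x ∈ C₁, r • x ∈ C₁)
    (hC₂ : Convex ℝ C₂) (hC₂cone : ∀ r : ℝ, 0 < r → ∀ x ∈ C₂, r • x ∈ C₂)
    (hF : IsFaceOf F (convexHull ℝ (C₁ ∪ C₂))) :
    IsFaceOf (F ∩ C₁) C₁ ∧ IsFaceOf (F ∩ C₂) C₂ ∧
      F = convexHull ℝ ((F ∩ C₁) ∪ (F ∩ C₂)) :=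
  stmt_3_general C₁ C₂ F hC₁ hC₂ hF
end
end

section
/- Let D ⊆ ℒ(M_m, M_n) be the cone of decomposable maps and V₁ the cone of (unnormalized) separable block matrices in M_n ⊗ M_m. Suppose φ is a boundary point of D that is an interior point of the cone P₁ of positive maps, and let A be a nonzero positive semidefinite block matrix with positive partial transpose satisfying ⟨A, φ⟩ = 0. Then A ∉ V₁, i.e., A is entangled. -/
open Matrix BigOperators
open scoped ComplexOrder

noncomputable section

/-- vectorization `z̃` of an `m×n` matrix, as an element of `ℂ^n ⊗ ℂ^m`. -/
def vecz {m n : ℕ} (z : Matrix (Fin m) (Fin n) ℂ) : Fin n × Fin m → ℂ :=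
  fun p => z p.2 p.1

/-- the rank-one block matrix `z̃ z̃* ∈ M_n ⊗ M_m`. -/
def vv {m n : ℕ} (z : Matrix (Fin m) (Fin n) ℂ) :
    Matrix (Fin n × Fin m) (Fin n × Fin m) ℂ :=
  fun p q => vecz z p * star (vecz z q)

/-- partial (block) transpose on `M_n ⊗ M_m`. -/
def ptrans {m n : ℕ} (A : Matrix (Fin n × Fin m) (Fin n × Fin m) ℂ) :
    Matrix (Fin n × Fin m) (Fin n × Fin m) ℂ :=
  fun p q => A (p.1, q.2) (q.1, p.2)

/-- the bilinear pairing `⟨A, φ⟩ = Σ_{i,j} Tr(φ(e_{ij}) a_{ij}ᵗ)`. -/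
def pair {m n : ℕ} (A : Matrix (Fin n × Fin m) (Fin n × Fin m) ℂ)
    (φ : Matrix (Fin m) (Fin m) ℂ → Matrix (Fin n) (Fin n) ℂ) : ℂ :=
  ∑ i : Fin m, ∑ j : Fin m, ∑ k : Fin n, ∑ l : Fin n,
    φ (Matrix.single i j 1) k l * A (k, i) (l, j)

/-- `φ_V : X ↦ V* X V`. -/
def phiV {m n : ℕ} (V : Matrix (Fin m) (Fin n) ℂ) :
    Matrix (Fin m) (Fin m) ℂ → Matrix (Fin n) (Fin n) ℂ :=
  fun X => Vᴴ * X * V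

/-- `φ^W : X ↦ W* Xᵗ W`. -/
def phiW {m n : ℕ} (W : Matrix (Fin m) (Fin n) ℂ) :
    Matrix (Fin m) (Fin m) ℂ → Matrix (Fin n) (Fin n) ℂ :=
  fun X => Wᴴ * Xᵀ * W

/-- the cone `P₁` of positive linear maps `M_m → M_n`. -/
def P1 (m n : ℕ) : Set (Matrix (Fin m) (Fin m) ℂ → Matrix (Fin n) (Fin n) ℂ) :=
  {φ | IsLinearMap ℂ φ ∧ ∀ X, X.PosSemidef → (φ X).PosSemidef}

/-- the cone `D` of decomposable maps: sums of a completely positive map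
`X ↦ Σ Vᵢ* X Vᵢ` and a completely copositive map `X ↦ Σ Wⱼ* Xᵗ Wⱼ`. -/
def Decomp (m n : ℕ) : Set (Matrix (Fin m) (Fin m) ℂ → Matrix (Fin n) (Fin n) ℂ) :=
  {φ | ∃ (N₁ N₂ : ℕ) (V : Fin N₁ → Matrix (Fin m) (Fin n) ℂ)
        (W : Fin N₂ → Matrix (Fin m) (Fin n) ℂ), ∀ X,
        φ X = (∑ i, (V i)ᴴ * X * V i) + ∑ j, (W j)ᴴ * Xᵀ * W j}

/-- interior point of a convex set, in the algebraic sense used in the paper. -/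
def IsInteriorPt {α : Type*} [AddCommGroup α] [Module ℝ α] (C : Set α) (x : α) : Prop :=
  x ∈ C ∧ ∀ y ∈ C, ∃ t : ℝ, 1 < t ∧ (1 - t) • y + t • x ∈ C

/-- membership in the cone `V₁` of (unnormalized) separable block matrices. -/
def InV1 {m n : ℕ} (A : Matrix (Fin n × Fin m) (Fin n × Fin m) ℂ) : Prop :=
  ∃ (N : ℕ) (z : Fin N → Matrix (Fin m) (Fin n) ℂ),
    (∀ k, Matrix.rank (z k) ≤ 1) ∧ A = ∑ k, vv (z k)

/-!
If `A` is separable, then `⟨A, ψ⟩ ≥ 0` for every positive map `ψ`: for a rank-one `z = u vᵀ`,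
`⟨z̃ z̃*, ψ⟩ = vᵀ ψ(u u*) v̄`. So `⟨A, ·⟩` is a nonnegative functional on `P₁` vanishing at the
interior point `φ`, hence it vanishes on all of `P₁`, in particular at the trace map, where it
equals `Tr A`. A positive semidefinite matrix of trace zero is zero.
-/

theorem IsInteriorPt.map_eq_zero_of_nonneg {α β : Type*} [AddCommGroup α] [Module ℝ α]
    [AddCommGroup β] [PartialOrder β] [IsOrderedAddMonoid β] [Module ℝ β]
    [PosSMulReflectLE ℝ β] {C : Set α} {x : α} (hx : IsInteriorPt C x) (ℓ : α →ₗ[ℝ] β)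
    (hℓ : ∀ y ∈ C, 0 ≤ ℓ y) (hℓx : ℓ x = 0) {y : α} (hy : y ∈ C) : ℓ y = 0 := by
  obtain ⟨t, ht, hmem⟩ := hx.2 y hy
  have h : 0 ≤ (1 - t) • ℓ y := by simpa [hℓx] using hℓ _ hmem
  have h' : (t - 1) • ℓ y ≤ 0 := by
    rwa [← neg_sub, neg_smul, neg_nonneg] at h
  exact le_antisymm (nonpos_of_smul_nonpos_of_pos_left h' (by linarith)) (hℓ y hy)

theorem Matrix.exists_eq_vecMulVec_of_rank_le_one {K m n : Type*} [Field K] [Fintype m]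
    [Fintype n] [DecidableEq n] {z : Matrix m n K} (hz : z.rank ≤ 1) :
    ∃ u v, z = vecMulVec u v := by
  obtain ⟨w, hw⟩ := finrank_le_one_iff.mp hz
  have hcol : ∀ k, ∃ c : K, c • (w : m → K) = fun i => z i k := fun k =>
    have : (fun i => z i k) ∈ LinearMap.range z.mulVecLin :=
      ⟨Pi.single k 1, by ext; simp⟩
    ⟨_, congrArg Subtype.val (hw ⟨_, this⟩).choose_spec⟩
  choose c hc using hcol
  refine ⟨w, c, ?_⟩
  ext i k
  simpa [vecMulVec_apply, mul_comm] using (congrFun (hc k) i).symm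

theorem IsLinearMap.apply_eq_sum_single {R M m n : Type*} [CommSemiring R] [AddCommMonoid M]
    [Module R M] [Fintype m] [Fintype n] [DecidableEq m] [DecidableEq n]
    {ψ : Matrix m n R → M} (hψ : IsLinearMap R ψ) (X : Matrix m n R) :
    ψ X = ∑ i, ∑ j, X i j • ψ (single i j 1) := by
  have hX : X = ∑ i, ∑ j, X i j • single i j (1 : R) := by
    simpa using matrix_eq_sum_single X
  calc ψ X = IsLinearMap.mk' ψ hψ (∑ i, ∑ j, X i j • single i j (1 : R)) := congrArg ψ hX
    _ = _ := by simp only [map_sum, IsLinearMap.mk'_apply, hψ.map_smul]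

theorem pair_vv_vecMulVec {m n : ℕ} {ψ : Matrix (Fin m) (Fin m) ℂ → Matrix (Fin n) (Fin n) ℂ}
    (hψ : IsLinearMap ℂ ψ) (u : Fin m → ℂ) (v : Fin n → ℂ) :
    pair (vv (vecMulVec u v)) ψ = v ⬝ᵥ ψ (vecMulVec u (star u)) *ᵥ star v := by
  simp only [pair, vv, vecz, dotProduct, mulVec, hψ.apply_eq_sum_single (vecMulVec u (star u)),
    Matrix.sum_apply, Matrix.smul_apply, vecMulVec_apply, smul_eq_mul, Finset.mul_sum,
    Finset.sum_mul, Pi.star_apply, star_mul']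
  simp_rw [Finset.sum_comm (s := (Finset.univ : Finset (Fin m)))
    (t := (Finset.univ : Finset (Fin n)))]
  refine Finset.sum_congr rfl fun _ _ => Finset.sum_congr rfl fun _ _ =>
    Finset.sum_congr rfl fun _ _ => Finset.sum_congr rfl fun _ _ => by ring

theorem pair_add_left {m n : ℕ} (A B : Matrix (Fin n × Fin m) (Fin n × Fin m) ℂ)
    (ψ : Matrix (Fin m) (Fin m) ℂ → Matrix (Fin n) (Fin n) ℂ) :
    pair (A + B) ψ = pair A ψ + pair B ψ := by
  simp only [pair, Matrix.add_apply, mul_add, Finset.sum_add_distrib]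

theorem pair_sum_left {m n : ℕ} {ι : Type*} (s : Finset ι)
    (B : ι → Matrix (Fin n × Fin m) (Fin n × Fin m) ℂ)
    (ψ : Matrix (Fin m) (Fin m) ℂ → Matrix (Fin n) (Fin n) ℂ) :
    pair (∑ t ∈ s, B t) ψ = ∑ t ∈ s, pair (B t) ψ :=
  map_sum (AddMonoidHom.mk' (pair · ψ) (pair_add_left · · ψ)) B s

def pairLinearMap {m n : ℕ} (A : Matrix (Fin n × Fin m) (Fin n × Fin m) ℂ) :
    (Matrix (Fin m) (Fin m) ℂ → Matrix (Fin n) (Fin n) ℂ) →ₗ[ℂ] ℂ where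
  toFun := pair A
  map_add' ψ₁ ψ₂ := by
    simp only [pair, Pi.add_apply, Matrix.add_apply, add_mul, Finset.sum_add_distrib]
  map_smul' c ψ := by
    simp only [pair, Pi.smul_apply, Matrix.smul_apply, smul_eq_mul, Finset.mul_sum, mul_assoc,
      RingHom.id_apply]

theorem InV1.pair_nonneg {m n : ℕ} {A : Matrix (Fin n × Fin m) (Fin n × Fin m) ℂ}
    (hA : InV1 A) {ψ : Matrix (Fin m) (Fin m) ℂ → Matrix (Fin n) (Fin n) ℂ}
    (hψ : ψ ∈ P1 m n) : 0 ≤ pair A ψ := by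
  obtain ⟨N, z, hz, rfl⟩ := hA
  rw [pair_sum_left]
  refine Finset.sum_nonneg fun k _ => ?_
  obtain ⟨u, v, huv⟩ := exists_eq_vecMulVec_of_rank_le_one (hz k)
  rw [huv, pair_vv_vecMulVec hψ.1]
  simpa using (hψ.2 _ (posSemidef_vecMulVec_self_star u)).dotProduct_mulVec_nonneg (star v)

def trMap (m n : ℕ) : Matrix (Fin m) (Fin m) ℂ → Matrix (Fin n) (Fin n) ℂ :=
  fun X => X.trace • 1

theorem trMap_mem_P1 (m n : ℕ) : trMap m n ∈ P1 m n :=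
  ⟨⟨fun X Y => by simp [trMap, add_smul], fun c X => by simp [trMap, smul_smul]⟩,
    fun _ hX => PosSemidef.one.smul hX.trace_nonneg⟩

theorem pair_trMap {m n : ℕ} (A : Matrix (Fin n × Fin m) (Fin n × Fin m) ℂ) :
    pair A (trMap m n) = A.trace := by
  have htr (i j : Fin m) : (single i j (1 : ℂ)).trace = if i = j then 1 else 0 := by
    split_ifs with h
    · exact h ▸ trace_single_eq_same i 1
    · exact trace_single_eq_of_ne i j 1 h
  rw [Matrix.trace, Fintype.sum_prod_type, Finset.sum_comm]
  simp [pair, trMap, htr, one_apply]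

theorem stmt_4_general (m n : ℕ)
    (φ : Matrix (Fin m) (Fin m) ℂ → Matrix (Fin n) (Fin n) ℂ)
    (hφint : IsInteriorPt (P1 m n) φ)
    (A : Matrix (Fin n × Fin m) (Fin n × Fin m) ℂ)
    (hA : A.PosSemidef) (hA0 : A ≠ 0)
    (hpair : pair A φ = 0) :
    ¬ InV1 A := by
  intro hsep
  have htr : pair A (trMap m n) = 0 :=
    hφint.map_eq_zero_of_nonneg ((pairLinearMap A).restrictScalars ℝ)
      (fun _ hψ => hsep.pair_nonneg hψ) hpair (trMap_mem_P1 m n)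
  exact hA0 (hA.trace_eq_zero_iff.mp (pair_trMap A ▸ htr))

/-- if `φ` is a boundary point of the cone `D` of decomposable maps which is an
interior point of the cone `P₁` of positive maps, and `A ≠ 0` is PSD with PSD partial
transpose and `⟨A, φ⟩ = 0`, then `A` is entangled, i.e. `A ∉ V₁`. -/
theorem stmt_4 (m n : ℕ)
    (φ : Matrix (Fin m) (Fin m) ℂ → Matrix (Fin n) (Fin n) ℂ)
    (hφD : φ ∈ Decomp m n) (hφbd : ¬ IsInteriorPt (Decomp m n) φ)
    (hφint : IsInteriorPt (P1 m n) φ)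
    (A : Matrix (Fin n × Fin m) (Fin n × Fin m) ℂ)
    (hA : A.PosSemidef) (hAt : (ptrans A).PosSemidef) (hA0 : A ≠ 0)
    (hpair : pair A φ = 0) :
    ¬ InV1 A :=
  stmt_4_general m n φ hφint A hA hA0 hpair
end
end

section
/- For 1 < a < 3, b > 0, c > 0 with 4bc = (3−a)², the map Φ[a,b,c] : M₃ → M₃ decomposes as Φ[a,b,c] = ((a−1)/2) Φ[3,0,0] + ((3−a)/2) Φ[1, √(b/c), √(c/b)]. -/
open Matrix BigOperators
open scoped ComplexOrder

noncomputable section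

/-- the map `Φ[a,b,c] : M₃ → M₃` of Cho–Kye–Lee. -/
def Phi (a b c : ℝ) : Matrix (Fin 3) (Fin 3) ℂ → Matrix (Fin 3) (Fin 3) ℂ :=
  fun x => Matrix.diagonal
    ![(a : ℂ) * x 0 0 + (b : ℂ) * x 1 1 + (c : ℂ) * x 2 2,
      (a : ℂ) * x 1 1 + (b : ℂ) * x 2 2 + (c : ℂ) * x 0 0,
      (a : ℂ) * x 2 2 + (b : ℂ) * x 0 0 + (c : ℂ) * x 1 1] - x

/-- `y₁ = λe₁₂+μe₂₁`, `y₂ = λe₂₃+μe₃₂`, `y₃ = μe₁₃+λe₃₁`. -/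
def yMat (lam mu : ℝ) : Fin 3 → Matrix (Fin 3) (Fin 3) ℂ :=
  ![!![0, (lam : ℂ), 0; (mu : ℂ), 0, 0; 0, 0, 0],
    !![0, 0, 0; 0, 0, (lam : ℂ); 0, (mu : ℂ), 0],
    !![0, 0, (mu : ℂ); 0, 0, 0; (lam : ℂ), 0, 0]]

/-- the PPT entangled state `A = x̃x̃* + Σᵢ ỹᵢỹᵢ*` with `x = I₃`. -/
def Amat (lam mu : ℝ) : Matrix (Fin 3 × Fin 3) (Fin 3 × Fin 3) ℂ :=
  vv (1 : Matrix (Fin 3) (Fin 3) ℂ) + ∑ i : Fin 3, vv (yMat lam mu i)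

theorem Phi_smul_add_smul (a b c a' b' c' s t : ℝ) (hst : s + t = 1)
    (X : Matrix (Fin 3) (Fin 3) ℂ) :
    (s : ℂ) • Phi a b c X + (t : ℂ) • Phi a' b' c' X =
      Phi (s * a + t * a') (s * b + t * b') (s * c + t * c') X := by
  have hst' : (s : ℂ) + t = 1 := by exact_mod_cast hst
  ext i j
  fin_cases i <;> fin_cases j <;> simp [Phi] <;> linear_combination (-X _ _) * hst'

theorem half_mul_sqrt_div_eq_of_four_mul_eq_sq {b c d : ℝ} (hc : 0 < c) (hd : 0 ≤ d)
    (h : 4 * b * c = d ^ 2) : d / 2 * √(b / c) = b := by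
  have hb : 0 ≤ b := nonneg_of_mul_nonneg_left (by nlinarith) hc
  calc d / 2 * √(b / c) = √((d / 2) ^ 2 * (b / c)) := by
        rw [Real.sqrt_mul (by positivity), Real.sqrt_sq (by positivity)]
    _ = √(b * b) := by congr 1; field_simp; linear_combination -b * h
    _ = b := Real.sqrt_mul_self hb

theorem stmt_5_general (a b c : ℝ) (ha3 : a < 3) (hb : 0 < b) (hc : 0 < c)
    (h : 4 * b * c = (3 - a) ^ 2) :
    ∀ X : Matrix (Fin 3) (Fin 3) ℂ,
      Phi a b c X = (((a - 1) / 2 : ℝ) : ℂ) • Phi 3 0 0 X +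
        (((3 - a) / 2 : ℝ) : ℂ) • Phi 1 (Real.sqrt (b / c)) (Real.sqrt (c / b)) X := by
  intro X
  have hd : 0 ≤ 3 - a := by linarith
  have hb' : (3 - a) / 2 * √(b / c) = b := half_mul_sqrt_div_eq_of_four_mul_eq_sq hc hd h
  have hc' : (3 - a) / 2 * √(c / b) = c :=
    half_mul_sqrt_div_eq_of_four_mul_eq_sq hb hd (by linarith)
  rw [Phi_smul_add_smul _ _ _ _ _ _ _ _ (by ring), hb', hc']
  congr 1 <;> ring

/-- for `1 < a < 3`, `b, c > 0` with `4bc = (3-a)²`,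
`Φ[a,b,c] = ((a-1)/2) Φ[3,0,0] + ((3-a)/2) Φ[1, √(b/c), √(c/b)]`. -/
theorem stmt_5 (a b c : ℝ) (ha1 : 1 < a) (ha3 : a < 3) (hb : 0 < b) (hc : 0 < c)
    (h : 4 * b * c = (3 - a) ^ 2) :
    ∀ X : Matrix (Fin 3) (Fin 3) ℂ,
      Phi a b c X = (((a - 1) / 2 : ℝ) : ℂ) • Phi 3 0 0 X +
        (((3 - a) / 2 : ℝ) : ℂ) • Phi 1 (Real.sqrt (b / c)) (Real.sqrt (c / b)) X :=
  stmt_5_general a b c ha3 hb hc h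
end
end

section
/- The map Φ[3,0,0] : M₃ → M₃, x ↦ 3·diag(x₁₁, x₂₂, x₃₃) − x, equals φ_{V₁} + φ_{V₂} + φ_{V₃}, where φ_V(X) = V* X V and V₁ = e₁₁ − e₂₂, V₂ = e₂₂ − e₃₃, V₃ = −e₁₁ + e₃₃ (e_{ij} being matrix units). In particular Φ[3,0,0] is completely positive. -/
open Matrix BigOperators
open scoped ComplexOrder

noncomputable section

/-- Complete positivity, via the Kraus representation `X ↦ Σᵢ Vᵢ* X Vᵢ`. -/
def CompletelyPositive {m n : ℕ}
    (φ : Matrix (Fin m) (Fin m) ℂ → Matrix (Fin n) (Fin n) ℂ) : Prop :=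
  ∃ (N : ℕ) (V : Fin N → Matrix (Fin m) (Fin n) ℂ),
    ∀ X, φ X = ∑ i, (V i)ᴴ * X * V i

/-! Conjugation by a diagonal matrix is a Schur multiplier, and `Φ[3,0,0]` is the Schur multiplier
by `3I - J`, the Gram matrix of the vectors `(1,-1,0)`, `(0,1,-1)`, `(-1,0,1)`. Hence `Φ[3,0,0]` is the sum of
the conjugations by the three corresponding diagonal matrices, a Kraus representation. -/

lemma phiV_diagonal {m : ℕ} (d : Fin m → ℂ) (X : Matrix (Fin m) (Fin m) ℂ) :
    phiV (diagonal d) X = of fun i j => star (d i) * X i j * d j := by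
  ext i j
  simp [phiV, diagonal_conjTranspose, diagonal_mul, mul_diagonal]

lemma Phi_zero_zero (a : ℝ) (X : Matrix (Fin 3) (Fin 3) ℂ) :
    Phi a 0 0 X = of fun i j => ((if i = j then (a : ℂ) else 0) - 1) * X i j := by
  ext i j
  fin_cases i <;> fin_cases j <;> simp [Phi] <;> ring

lemma diagonal_fin_three (a b c : ℂ) :
    (!![a, 0, 0; 0, b, 0; 0, 0, c] : Matrix (Fin 3) (Fin 3) ℂ) = diagonal ![a, b, c] := by
  ext i j
  fin_cases i <;> fin_cases j <;> rfl

lemma Phi_three_zero_zero_eq_add_phiV (X : Matrix (Fin 3) (Fin 3) ℂ) :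
    Phi 3 0 0 X =
      phiV (!![1, 0, 0; 0, -1, 0; 0, 0, 0] : Matrix (Fin 3) (Fin 3) ℂ) X +
      phiV (!![0, 0, 0; 0, 1, 0; 0, 0, -1] : Matrix (Fin 3) (Fin 3) ℂ) X +
      phiV (!![-1, 0, 0; 0, 0, 0; 0, 0, 1] : Matrix (Fin 3) (Fin 3) ℂ) X := by
  simp only [diagonal_fin_three, phiV_diagonal, Phi_zero_zero]
  ext i j
  fin_cases i <;> fin_cases j <;> simp <;> ring

/-- `Φ[3,0,0] = φ_{V₁} + φ_{V₂} + φ_{V₃}` with `V₁ = e₁₁ - e₂₂`,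
`V₂ = e₂₂ - e₃₃`, `V₃ = -e₁₁ + e₃₃`; in particular `Φ[3,0,0]` is completely positive. -/
theorem stmt_6 :
    (∀ X : Matrix (Fin 3) (Fin 3) ℂ,
      Phi 3 0 0 X =
        phiV (!![1, 0, 0; 0, -1, 0; 0, 0, 0] : Matrix (Fin 3) (Fin 3) ℂ) X +
        phiV (!![0, 0, 0; 0, 1, 0; 0, 0, -1] : Matrix (Fin 3) (Fin 3) ℂ) X +
        phiV (!![-1, 0, 0; 0, 0, 0; 0, 0, 1] : Matrix (Fin 3) (Fin 3) ℂ) X) ∧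
    CompletelyPositive (Phi 3 0 0) :=
  ⟨Phi_three_zero_zero_eq_add_phiV, 3, ![_, _, _], fun X => by
    rw [Phi_three_zero_zero_eq_add_phiV, Fin.sum_univ_three]; rfl⟩
end
end

section
/- Let λ, μ > 0 with λμ = 1 and λ ≠ 1, and let x = I₃, y₁ = λe₁₂ + μe₂₁, y₂ = λe₂₃ + μe₃₂, y₃ = μe₁₃ + λe₃₁ ∈ M₃. Then A := x̃x̃* + Σ_{i=1}^3 ỹᵢỹᵢ* ∈ M₃ ⊗ M₃ is positive semidefinite and its partial transpose A^τ is positive semidefinite. -/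
open Matrix BigOperators
open scoped ComplexOrder

noncomputable section

/-! Each summand `z̃z̃*` of `A` is a rank-one positive matrix, so `A ⪰ 0`. For the partial
transpose, write `E_{(a,b),(c,d)}` for the matrix units of `M₃ ⊗ M₃`; the partial transpose sends
`E_{(a,b),(c,d)}` to `E_{(a,d),(c,b)}`. It therefore exchanges the off-diagonal part
`Σ_{i≠j} E_{(i,i),(j,j)}` of `x̃x̃*` with the cross terms `λμ E_{(i,j),(j,i)}` of the `ỹₖỹₖ*`,
and fixes their diagonal terms. Since `λμ = 1`, `A^τ = A`. -/

lemma vv_posSemidef {m n : ℕ} (z : Matrix (Fin m) (Fin n) ℂ) : (vv z).PosSemidef :=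
  posSemidef_vecMulVec_self_star _

lemma Amat_posSemidef (lam mu : ℝ) : (Amat lam mu).PosSemidef :=
  (vv_posSemidef _).add (posSemidef_sum _ fun _ _ => vv_posSemidef _)

lemma ptrans_Amat {lam mu : ℝ} (hlm : lam * mu = 1) : ptrans (Amat lam mu) = Amat lam mu := by
  have hc : (lam : ℂ) * mu = 1 := by exact_mod_cast hlm
  ext ⟨p₁, p₂⟩ ⟨q₁, q₂⟩
  simp only [ptrans, Amat, Matrix.add_apply, Fin.sum_univ_three, vv, vecz, yMat]
  fin_cases p₁ <;> fin_cases p₂ <;> fin_cases q₁ <;> fin_cases q₂ <;> simp [hc, mul_comm (mu : ℂ)]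

theorem stmt_8_general (lam mu : ℝ) (hlm : lam * mu = 1) :
    (Amat lam mu).PosSemidef ∧ (ptrans (Amat lam mu)).PosSemidef :=
  ⟨Amat_posSemidef lam mu, ptrans_Amat hlm ▸ Amat_posSemidef lam mu⟩

/-- for `λ, μ > 0` with `λμ = 1`, `λ ≠ 1`, the matrix
`A = x̃x̃* + Σᵢ ỹᵢỹᵢ*` is positive semidefinite with positive semidefinite
partial transpose. -/
theorem stmt_8 (lam mu : ℝ) (hl : 0 < lam) (hm : 0 < mu) (hlm : lam * mu = 1)
    (hne : lam ≠ 1) :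
    (Amat lam mu).PosSemidef ∧ (ptrans (Amat lam mu)).PosSemidef :=
  stmt_8_general lam mu hlm
end
end

section
/- Let λ, μ > 0 with λμ = 1, λ ≠ 1, and let A = x̃x̃* + Σ_{i=1}^3 ỹᵢỹᵢ* with x = I₃, y₁ = λe₁₂ + μe₂₁, y₂ = λe₂₃ + μe₃₂, y₃ = μe₁₃ + λe₃₁. Then ⟨A, Φ[2,b,c]⟩ = 0, where √(b/c) = λ² and 4bc = 1 (i.e. b = λ²/2, c = μ²/2), and ⟨A, φ⟩ = Σ_{i,j} Tr(φ(e_{ij}) a_{ij}ᵗ). -/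
open Matrix BigOperators
open scoped ComplexOrder

noncomputable section

/-- `⟨A, Φ[2,b,c]⟩ = 0` where `b = λ²/2`, `c = μ²/2`
(so `√(b/c) = λ²` and `4bc = 1`). -/
theorem stmt_9 (lam mu : ℝ) (hl : 0 < lam) (hm : 0 < mu) (hlm : lam * mu = 1)
    (hne : lam ≠ 1) :
    pair (Amat lam mu) (Phi 2 (lam ^ 2 / 2) (mu ^ 2 / 2)) = 0 := by
  have hlmC : (lam:ℂ) * (mu:ℂ) = 1 := by
    rw [← Complex.ofReal_mul, hlm, Complex.ofReal_one]
  simp only [pair, Amat, Phi, vv, vecz, yMat, Fin.sum_univ_succ, Fin.sum_univ_zero,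
    Matrix.add_apply, Matrix.sub_apply, Matrix.diagonal_apply, Matrix.one_apply,
    Matrix.single]
  norm_num [Fin.ext_iff, Matrix.cons_val_zero, Matrix.cons_val_one]
  simp only [Matrix.vecHead, Matrix.vecTail, Function.comp, Pi.zero_apply, map_zero, mul_zero, zero_mul,
    Matrix.cons_val, Matrix.cons_val_succ, Matrix.cons_val_zero, Matrix.of_apply, Complex.conj_ofReal]
  ring_nf
  linear_combination (3*(lam:ℂ)*(mu:ℂ)+3)*hlmC
end
end

section
/- Let λ, μ > 0 with λμ = 1 and λ ≠ 1, and let A = x̃x̃* + Σ_{i=1}^3 ỹᵢỹᵢ* with x = I₃, y₁ = λe₁₂ + μe₂₁, y₂ = λe₂₃ + μe₃₂, y₃ = μe₁₃ + λe₃₁ ∈ M₃. Then A, viewed as a 9×9 matrix, has rank 4. -/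
open Matrix BigOperators
open scoped ComplexOrder

noncomputable section

/-!
Writing `B` for the `9 × 4` matrix with columns `x̃, ỹ₁, ỹ₂, ỹ₃`, we have `A = B B*`, so
`rank A = rank B = rank (B* B)`. The entries of `B* B` are the Hilbert–Schmidt inner products
`Tr (z* w)` of `x, y₁, y₂, y₃`, which are pairwise orthogonal (disjoint supports) and nonzero, so
`B* B` is an invertible diagonal matrix.
-/

section VecMatrix

variable {m n : ℕ} {ι : Type*}

def vecCols (z : ι → Matrix (Fin m) (Fin n) ℂ) : Matrix (Fin n × Fin m) ι ℂ :=
  of fun p i => vecz (z i) p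

lemma sum_vv_eq_vecCols_mul_conjTranspose [Fintype ι] (z : ι → Matrix (Fin m) (Fin n) ℂ) :
    ∑ i, vv (z i) = vecCols z * (vecCols z)ᴴ := by
  ext p q
  simp [vv, vecCols, mul_apply, Matrix.sum_apply]

lemma conjTranspose_vecCols_mul_vecCols (z : ι → Matrix (Fin m) (Fin n) ℂ) :
    (vecCols z)ᴴ * vecCols z = of fun i j => ((z i)ᴴ * z j).trace := by
  ext i j
  simp [vecCols, vecz, mul_apply, trace, Fintype.sum_prod_type]

lemma rank_sum_vv_of_pairwise_orthogonal [Fintype ι] [DecidableEq ι]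
    (z : ι → Matrix (Fin m) (Fin n) ℂ)
    (horth : Pairwise fun i j => ((z i)ᴴ * z j).trace = 0) (hz : ∀ i, z i ≠ 0) :
    (∑ i, vv (z i)).rank = Fintype.card ι := by
  have hgram : (vecCols z)ᴴ * vecCols z = diagonal fun i => ((z i)ᴴ * z i).trace := by
    rw [conjTranspose_vecCols_mul_vecCols]
    ext i j
    rcases eq_or_ne i j with rfl | hij
    · simp
    · simp [horth hij, hij]
  rw [sum_vv_eq_vecCols_mul_conjTranspose, rank_self_mul_conjTranspose,
    ← rank_conjTranspose_mul_self, hgram, rank_diagonal]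
  simp [trace_conjTranspose_mul_self_eq_zero_iff, hz]

end VecMatrix

def xyMat (lam mu : ℝ) : Fin 4 → Matrix (Fin 3) (Fin 3) ℂ :=
  vecCons 1 (yMat lam mu)

lemma Amat_eq_sum_vv (lam mu : ℝ) : Amat lam mu = ∑ i, vv (xyMat lam mu i) := by
  simp [Amat, xyMat, Fin.sum_univ_succ]

lemma xyMat_pairwise_orthogonal (lam mu : ℝ) :
    Pairwise fun i j => ((xyMat lam mu i)ᴴ * xyMat lam mu j).trace = 0 := by
  intro i j hij
  fin_cases i <;> fin_cases j <;> first
    | exact absurd rfl hij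
    | simp [xyMat, yMat, trace, Fin.sum_univ_succ, mul_apply, conjTranspose_apply]

lemma xyMat_ne_zero {lam : ℝ} (hl : lam ≠ 0) (mu : ℝ) (i : Fin 4) : xyMat lam mu i ≠ 0 := by
  intro h
  fin_cases i
  · simpa [xyMat] using congr_fun (congr_fun h 0) 0
  · simpa [xyMat, yMat, hl] using congr_fun (congr_fun h 0) 1
  · simpa [xyMat, yMat, hl] using congr_fun (congr_fun h 1) 2
  · simpa [xyMat, yMat, hl] using congr_fun (congr_fun h 2) 0

theorem stmt_10_general (lam mu : ℝ) (hl : 0 < lam) :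
    (Amat lam mu).rank = 4 := by
  rw [Amat_eq_sum_vv, rank_sum_vv_of_pairwise_orthogonal _ (xyMat_pairwise_orthogonal lam mu)
    (xyMat_ne_zero hl.ne' mu), Fintype.card_fin]

/-- the matrix `A`, viewed as a `9×9` matrix, has rank `4`. -/
theorem stmt_10 (lam mu : ℝ) (hl : 0 < lam) (hm : 0 < mu) (hlm : lam * mu = 1)
    (hne : lam ≠ 1) :
    (Amat lam mu).rank = 4 :=
  stmt_10_general lam mu hl
end
end

section
/- Let λ, μ > 0 with λμ = 1 and λ ≠ 1. The four-dimensional subspace of M₃ spanned by {I₃, λe₁₂+μe₂₁, λe₂₃+μe₃₂, μe₁₃+λe₃₁} contains no nonzero matrix of rank one. -/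
open Matrix BigOperators
open scoped ComplexOrder

noncomputable section

/-! An element `a • 1 + b • y₁ + c • y₂ + d • y₃` of the span has diagonal `a` and off-diagonal
entries `b, c, d` times `λ` or `μ`. If it has rank one, its principal `2 × 2` minors give
`a² = b² λμ = b²` and likewise `a² = c² = d²`, while two off-diagonal minors combine to
`bc (λ³ - μ³) = 0`. Since `λ³ ≠ μ³` when `λ ≠ 1`, one of `b, c` vanishes, hence so do `a`, `b`, `c`, `d`. -/

theorem Matrix.mul_sub_mul_eq_zero_of_rank_le_one {m n K : Type*} [Fintype n] [Field K]
    {A : Matrix m n K} (hA : A.rank ≤ 1) (i i' : m) (j j' : n) :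
    A i j * A i' j' - A i j' * A i' j = 0 := by
  by_contra h
  have hdet : IsUnit (A.submatrix ![i, i'] ![j, j']).det := by
    rw [isUnit_iff_ne_zero, Matrix.det_fin_two]
    simpa using h
  have hrank : (A.submatrix ![i, i'] ![j, j']).rank = 2 := by
    simpa using (A.submatrix ![i, i'] ![j, j']).rank_of_isUnit
      ((Matrix.isUnit_iff_isUnit_det _).mpr hdet)
  have := A.rank_submatrix_le ![i, i'] ![j, j']
  omega

theorem pow_three_ne_pow_three_of_mul_eq_one {x y : ℝ} (hx : 0 < x) (hxy : x * y = 1)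
    (hx1 : x ≠ 1) : x ^ 3 ≠ y ^ 3 := by
  intro h
  obtain rfl : y = x := ((Odd.pow_inj (by decide)).mp h).symm
  exact hx1 (by nlinarith)

def spanMat (lam mu a b c d : ℂ) : Matrix (Fin 3) (Fin 3) ℂ :=
  !![a, b * lam, d * mu; b * mu, a, c * lam; d * lam, c * mu, a]

lemma smul_one_add_smul_yMat (lam mu : ℝ) (a b c d : ℂ) :
    a • (1 : Matrix (Fin 3) (Fin 3) ℂ) +
        (b • yMat lam mu 0 + c • yMat lam mu 1 + d • yMat lam mu 2) =
      spanMat lam mu a b c d := by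
  ext i j
  fin_cases i <;> fin_cases j <;> simp [yMat, spanMat]

theorem spanMat_eq_zero_of_rank_le_one {lam mu a b c d : ℂ} (hlm : lam * mu = 1)
    (hne : lam ^ 3 ≠ mu ^ 3) (h : (spanMat lam mu a b c d).rank ≤ 1) :
    spanMat lam mu a b c d = 0 := by
  have minor := Matrix.mul_sub_mul_eq_zero_of_rank_le_one h
  have m0101 : a * a - b * lam * (b * mu) = 0 := by simpa [spanMat] using minor 0 1 0 1
  have m1212 : a * a - c * lam * (c * mu) = 0 := by simpa [spanMat] using minor 1 2 1 2
  have m0202 : a * a - d * mu * (d * lam) = 0 := by simpa [spanMat] using minor 0 2 0 2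
  have m0112 : b * lam * (c * lam) - d * mu * a = 0 := by simpa [spanMat] using minor 0 1 1 2
  have m1201 : b * mu * (c * mu) - a * (d * lam) = 0 := by simpa [spanMat] using minor 1 2 0 1
  have hb : b ^ 2 = a ^ 2 := by linear_combination -m0101 - b ^ 2 * hlm
  have hc : c ^ 2 = a ^ 2 := by linear_combination -m1212 - c ^ 2 * hlm
  have hd : d ^ 2 = a ^ 2 := by linear_combination -m0202 - d ^ 2 * hlm
  have hbc : b * c * (lam ^ 3 - mu ^ 3) = 0 := by linear_combination lam * m0112 - mu * m1201
  have ha : a = 0 := by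
    rcases mul_eq_zero.mp hbc with hbc | hcube
    · rcases mul_eq_zero.mp hbc with rfl | rfl
      · exact (pow_eq_zero_iff two_ne_zero).mp (by simpa using hb.symm)
      · exact (pow_eq_zero_iff two_ne_zero).mp (by simpa using hc.symm)
    · exact absurd (sub_eq_zero.mp hcube) hne
  subst ha
  obtain rfl : b = 0 := by simpa using hb
  obtain rfl : c = 0 := by simpa using hc
  obtain rfl : d = 0 := by simpa using hd
  ext i j
  fin_cases i <;> fin_cases j <;> simp [spanMat]

theorem stmt_13_general (lam mu : ℝ) (hl : 0 < lam) (hlm : lam * mu = 1)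
    (hne : lam ≠ 1) :
    ∀ z ∈ Submodule.span ℂ
        ({(1 : Matrix (Fin 3) (Fin 3) ℂ), yMat lam mu 0, yMat lam mu 1, yMat lam mu 2} :
          Set (Matrix (Fin 3) (Fin 3) ℂ)),
      Matrix.rank z = 1 → False := by
  intro z hz hrank
  obtain ⟨a, w, hw, rfl⟩ := Submodule.mem_span_insert.mp hz
  obtain ⟨b, c, d, rfl⟩ := Submodule.mem_span_triple.mp hw
  rw [smul_one_add_smul_yMat] at hrank
  have hlmC : (lam : ℂ) * mu = 1 := by exact_mod_cast hlm
  have hcube : (lam : ℂ) ^ 3 ≠ (mu : ℂ) ^ 3 := by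
    exact_mod_cast pow_three_ne_pow_three_of_mul_eq_one hl hlm hne
  rw [spanMat_eq_zero_of_rank_le_one hlmC hcube hrank.le, Matrix.rank_zero] at hrank
  exact zero_ne_one hrank

/-- the span of `{I₃, λe₁₂+μe₂₁, λe₂₃+μe₃₂, μe₁₃+λe₃₁}` contains no
nonzero rank-one matrix. -/
theorem stmt_13 (lam mu : ℝ) (hl : 0 < lam) (hm : 0 < mu) (hlm : lam * mu = 1)
    (hne : lam ≠ 1) :
    ∀ z ∈ Submodule.span ℂ
        ({(1 : Matrix (Fin 3) (Fin 3) ℂ), yMat lam mu 0, yMat lam mu 1, yMat lam mu 2} :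
          Set (Matrix (Fin 3) (Fin 3) ℂ)),
      Matrix.rank z = 1 → False :=
  stmt_13_general lam mu hl hlm hne
end
end

section
/- Let λ > 0, λ ≠ 1, μ = 1/λ, ζ = √(λ²/(2+2λ⁶)). Define x₁ = (1/2,1/2,1/2,1/2), x₂ = (λ³ζ, ζ, λ³ζ, ζ), x₃ = (1/(2λ), 1/(2λ), −1/(2λ), −1/(2λ)), x₄ = (ζ, λ³ζ, −ζ, −λ³ζ), and y₁ = x₁, y₂ = −x₂, y₃ = x₃, y₄ = −x₄. For i = 1,...,4 define z_i and z_{i+4} as the 3×3 matrices with rows (x_{1i}, x_{2i}, x_{3i}), (x_{2i}/λ², x_{1i}, x_{4i}), (λ²x_{3i}, x_{4i}/λ², x_{1i}) and similarly with y in place of x. Then A = (1/2) Σ_{i=1}^8 z_i z_i*, where A = x̃x̃* + Σỹᵢỹᵢ* is the PPT entangled state built from x = I₃, y₁ = λe₁₂+μe₂₁, y₂ = λe₂₃+μe₃₂, y₃ = μe₁₃+λe₃₁. [Note: here z_i z_i* abbreviates z̃_i z̃_i* in M₃⊗M₃.] -/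
open Matrix BigOperators
open scoped ComplexOrder

noncomputable section

/-- `ζ = √(λ²/(2+2λ⁶))`. -/
def zet (lam : ℝ) : ℝ := Real.sqrt (lam ^ 2 / (2 + 2 * lam ^ 6))

/-- the vectors `x₁, x₂, x₃, x₄ ∈ ℂ⁴` (rows indexed first). -/
def xv (lam : ℝ) : Fin 4 → Fin 4 → ℝ :=
  ![![1 / 2, 1 / 2, 1 / 2, 1 / 2],
    ![lam ^ 3 * zet lam, zet lam, lam ^ 3 * zet lam, zet lam],
    ![1 / (2 * lam), 1 / (2 * lam), -(1 / (2 * lam)), -(1 / (2 * lam))],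
    ![zet lam, lam ^ 3 * zet lam, -zet lam, -(lam ^ 3 * zet lam)]]

/-- `y₁ = x₁`, `y₂ = -x₂`, `y₃ = x₃`, `y₄ = -x₄`. -/
def yv (lam : ℝ) : Fin 4 → Fin 4 → ℝ :=
  ![xv lam 0, fun i => -xv lam 1 i, xv lam 2, fun i => -xv lam 3 i]

/-- the matrix `zᵢ` built from a family `v = (v₁,v₂,v₃,v₄)` of vectors:
rows `(v_{1i}, v_{2i}, v_{3i})`, `(v_{2i}/λ², v_{1i}, v_{4i})`, `(λ²v_{3i}, v_{4i}/λ², v_{1i})`. -/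
def zMat (lam : ℝ) (v : Fin 4 → Fin 4 → ℝ) (i : Fin 4) : Matrix (Fin 3) (Fin 3) ℂ :=
  !![((v 0 i : ℝ) : ℂ), ((v 1 i : ℝ) : ℂ), ((v 2 i : ℝ) : ℂ);
     ((v 1 i / lam ^ 2 : ℝ) : ℂ), ((v 0 i : ℝ) : ℂ), ((v 3 i : ℝ) : ℂ);
     ((lam ^ 2 * v 2 i : ℝ) : ℂ), ((v 3 i / lam ^ 2 : ℝ) : ℂ), ((v 0 i : ℝ) : ℂ)]

/-!
Put `F = (I₃, y₁, y₃, y₂)`, so that `A = Σ_r F̃_r F̃_r*`. Each `zᵢ` is a combination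
`Σ_r u_{ri} F_r`, where `u_r` is `x_r` (or `y_r`) divided by the `r`-th entry of `(1, λ, λ⁻¹, λ)`.
The `4 × 8` matrix `U` of these coefficients satisfies `U U* = 2 I`: the rescaled `x_r` are unit
vectors with `x₁ ⊥ x₃` and `x₂ ⊥ x₄`, and passing to the `y_r` flips the signs of `x₂, x₄`, which
cancels the remaining cross terms. With `M` the matrix whose columns are the `F̃_r`, this gives
`Σᵢ z̃ᵢ z̃ᵢ* = (M U)(M U)* = M (U U*) M* = 2 M M* = 2 A`.
-/

section

variable {m n : ℕ} {ι κ : Type*} [Fintype ι]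

def veczCols (z : κ → Matrix (Fin m) (Fin n) ℂ) : Matrix (Fin n × Fin m) κ ℂ :=
  of fun p k => vecz (z k) p

theorem sum_vv_eq_veczCols_mul_conjTranspose [Fintype κ] (z : κ → Matrix (Fin m) (Fin n) ℂ) :
    ∑ k, vv (z k) = veczCols z * (veczCols z)ᴴ := by
  ext p q
  simp only [Matrix.sum_apply, vv, veczCols, mul_apply, of_apply, conjTranspose_apply]

theorem veczCols_sum_smul (F : ι → Matrix (Fin m) (Fin n) ℂ) (U : Matrix ι κ ℂ) :
    veczCols (fun k => ∑ r, U r k • F r) = veczCols F * U := by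
  ext p k
  simp only [veczCols, vecz, Matrix.sum_apply, Matrix.smul_apply, smul_eq_mul, mul_comm, of_apply,
    mul_apply]

theorem sum_vv_sum_smul_of_mul_conjTranspose_eq_smul_one [Fintype κ] [DecidableEq ι]
    (F : ι → Matrix (Fin m) (Fin n) ℂ) (U : Matrix ι κ ℂ) (c : ℂ) (hU : U * Uᴴ = c • 1) :
    ∑ k, vv (∑ r, U r k • F r) = c • ∑ r, vv (F r) := by
  rw [sum_vv_eq_veczCols_mul_conjTranspose, sum_vv_eq_veczCols_mul_conjTranspose,
    veczCols_sum_smul, conjTranspose_mul, Matrix.mul_assoc, ← Matrix.mul_assoc U, hU,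
    Matrix.smul_mul, Matrix.one_mul, Matrix.mul_smul]

end

theorem zet_sq (lam : ℝ) : zet lam ^ 2 * (2 + 2 * lam ^ 6) = lam ^ 2 := by
  rw [zet, Real.sq_sqrt (by positivity), div_mul_cancel₀ _ (by positivity)]

def zScale (lam : ℝ) : Fin 4 → ℝ := ![1, lam, lam⁻¹, lam]

def amatTerms (lam : ℝ) : Fin 4 → Matrix (Fin 3) (Fin 3) ℂ :=
  ![1, yMat lam lam⁻¹ 0, yMat lam lam⁻¹ 2, yMat lam lam⁻¹ 1]

def zCoeff (lam : ℝ) (v : Fin 4 → Fin 4 → ℝ) : Matrix (Fin 4) (Fin 4) ℂ :=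
  of fun r i => ((v r i / zScale lam r : ℝ) : ℂ)

theorem Amat_eq_sum_vv_amatTerms (lam : ℝ) : Amat lam lam⁻¹ = ∑ r, vv (amatTerms lam r) := by
  simp only [Amat, amatTerms, Fin.sum_univ_three, Fin.sum_univ_four, Fin.isValue, cons_val_zero,
    cons_val_one, cons_val]
  abel

theorem zMat_eq_sum_zCoeff_smul {lam : ℝ} (hl : lam ≠ 0) (v : Fin 4 → Fin 4 → ℝ) (i : Fin 4) :
    zMat lam v i = ∑ r, zCoeff lam v r i • amatTerms lam r := by
  ext a b
  fin_cases a <;> fin_cases b <;>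
    simp only [zMat, zCoeff, zScale, amatTerms, yMat, Fin.sum_univ_four, Matrix.add_apply,
      Matrix.smul_apply, of_apply, cons_val', cons_val_zero, cons_val_one, cons_val,
      cons_val_fin_one, one_apply, Fin.isValue, Fin.zero_eta, Fin.mk_one, Fin.reduceFinMk,
      Fin.reduceEq, ↓reduceIte, smul_eq_mul, Complex.ofReal_div, Complex.ofReal_inv,
      Complex.ofReal_mul, Complex.ofReal_pow, Complex.ofReal_one, mul_zero, mul_one, add_zero,
      zero_add] <;>
    field_simp

theorem fromCols_zCoeff_mul_conjTranspose {lam : ℝ} (hl : lam ≠ 0) :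
    fromCols (zCoeff lam (xv lam)) (zCoeff lam (yv lam)) *
      (fromCols (zCoeff lam (xv lam)) (zCoeff lam (yv lam)))ᴴ = (2 : ℂ) • 1 := by
  -- `ζ` is chosen exactly so that `‖x₂‖ = ‖x₄‖ = λ`
  have hζ : (zet lam : ℂ) ^ 2 * (2 + 2 * (lam : ℂ) ^ 6) = (lam : ℂ) ^ 2 := by
    exact_mod_cast zet_sq lam
  rw [conjTranspose_fromCols_eq_fromRows_conjTranspose, fromCols_mul_fromRows]
  ext r s
  fin_cases r <;> fin_cases s <;>
    simp only [zCoeff, xv, yv, zScale, Matrix.add_apply, Matrix.smul_apply, mul_apply,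
      conjTranspose_apply, of_apply, cons_val', cons_val_zero, cons_val_one, cons_val,
      cons_val_fin_one, one_apply, Fin.isValue, Fin.zero_eta, Fin.mk_one, Fin.reduceFinMk,
      Fin.reduceEq, ↓reduceIte, Fin.sum_univ_four, smul_eq_mul, RCLike.star_def,
      Complex.conj_ofReal] <;>
    push_cast <;> field_simp <;>
    first | ring1 | linear_combination 2 * hζ

theorem stmt_16_general (lam mu : ℝ) (hl : 0 < lam) (hm : mu = lam⁻¹) :
    Amat lam mu = (1 / 2 : ℂ) •
      ((∑ i : Fin 4, vv (zMat lam (xv lam) i)) +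
        ∑ i : Fin 4, vv (zMat lam (yv lam) i)) := by
  subst hm
  have hl0 : lam ≠ 0 := hl.ne'
  have hframe := sum_vv_sum_smul_of_mul_conjTranspose_eq_smul_one (amatTerms lam) _ _
    (fromCols_zCoeff_mul_conjTranspose hl0)
  simp only [Fintype.sum_sum_type, fromCols_apply_inl, fromCols_apply_inr,
    ← zMat_eq_sum_zCoeff_smul hl0] at hframe
  rw [hframe, smul_smul, Amat_eq_sum_vv_amatTerms]
  norm_num

/-- `A = (1/2) Σ_{i=1}^8 z̃ᵢ z̃ᵢ*`, where `z₁,…,z₄` come from the `xᵢ`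
and `z₅,…,z₈` from the `yᵢ`. -/
theorem stmt_16 (lam mu : ℝ) (hl : 0 < lam) (hne : lam ≠ 1) (hm : mu = lam⁻¹) :
    Amat lam mu = (1 / 2 : ℂ) •
      ((∑ i : Fin 4, vv (zMat lam (xv lam) i)) +
        ∑ i : Fin 4, vv (zMat lam (yv lam) i)) :=
  stmt_16_general lam mu hl hm
end
end

section
/- With λ > 0, λ ≠ 1, ζ = √(λ²/(2+2λ⁶)), and z_i (i = 1,…,8) the 3×3 matrices defined from x₁,…,x₄, y₁,…,y₄ as in the explicit construction, every z_i has determinant zero, hence rank at most 2. -/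
open Matrix BigOperators
open scoped ComplexOrder

noncomputable section

/-!
The determinant of `!![a, b, c; b / λ², a, d; λ² c, d / λ², a]` is
`a³ - a (b² + d²) / λ² + b c d (λ² + λ⁻⁴) - a c² λ²`, which is unchanged by `b ↔ d`,
`(c, d) ↦ (-c, -d)` and `(b, d) ↦ (-b, -d)`. These symmetries carry every column of the `xⱼ`
and `yⱼ` to `(1/2, λ³ζ, 1/(2λ), ζ)`, where the first and last terms cancel, and so do the middle
two, whatever the value of `ζ`. A singular square matrix has a nonzero kernel, so rank-nullity
bounds its rank.
-/

theorem Matrix.rank_lt_card_of_det_eq_zero {K n : Type*} [Field K] [Fintype n] [DecidableEq n]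
    {A : Matrix n n K} (h : A.det = 0) : A.rank < Fintype.card n := by
  obtain ⟨v, hv, hAv⟩ := Matrix.exists_mulVec_eq_zero_iff.2 h
  have hker : 0 < Module.finrank K (LinearMap.ker A.mulVecLin) :=
    Module.finrank_pos_iff_exists_ne_zero.2 ⟨⟨v, hAv⟩, fun h0 => hv (congrArg Subtype.val h0)⟩
  have hrank := LinearMap.finrank_range_add_finrank_ker A.mulVecLin
  rw [Module.finrank_fintype_fun_eq_card] at hrank
  change A.rank + _ = _ at hrank
  omega

def zDet (lam a b c d : ℝ) : ℝ :=
  a ^ 3 - a * (b ^ 2 + d ^ 2) / lam ^ 2 + b * c * d * (lam ^ 2 + 1 / lam ^ 4) - a * c ^ 2 * lam ^ 2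

theorem det_zMat (lam : ℝ) (v : Fin 4 → Fin 4 → ℝ) (i : Fin 4) :
    (zMat lam v i).det = zDet lam (v 0 i) (v 1 i) (v 2 i) (v 3 i) := by
  rw [Matrix.det_fin_three]
  simp only [zMat, zDet, of_apply, cons_val', cons_val_zero, cons_val_one, cons_val,
    cons_val_fin_one, Complex.ofReal_div, Complex.ofReal_pow, Complex.ofReal_mul,
    Complex.ofReal_sub, Complex.ofReal_add, Complex.ofReal_inv, one_div]
  ring

theorem zDet_neg_neg (lam a b c d : ℝ) : zDet lam a (-b) c (-d) = zDet lam a b c d := by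
  unfold zDet; ring

theorem zDet_swap (lam a b c d : ℝ) : zDet lam a d c b = zDet lam a b c d := by
  unfold zDet; ring

theorem zDet_neg_neg_right (lam a b c d : ℝ) : zDet lam a b (-c) (-d) = zDet lam a b c d := by
  unfold zDet; ring

theorem zDet_half_lam_cube {lam : ℝ} (hl : lam ≠ 0) (z : ℝ) :
    zDet lam (1 / 2) (lam ^ 3 * z) (1 / (2 * lam)) z = 0 := by
  unfold zDet
  field_simp
  ring

theorem zDet_xv {lam : ℝ} (hl : lam ≠ 0) (i : Fin 4) :
    zDet lam (xv lam 0 i) (xv lam 1 i) (xv lam 2 i) (xv lam 3 i) = 0 := by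
  fin_cases i <;> simp only [xv, Fin.zero_eta, Fin.mk_one, Fin.reduceFinMk, Matrix.cons_val]
  · exact zDet_half_lam_cube hl _
  · rw [zDet_swap]; exact zDet_half_lam_cube hl _
  · rw [zDet_neg_neg_right]; exact zDet_half_lam_cube hl _
  · rw [zDet_neg_neg_right, zDet_swap]; exact zDet_half_lam_cube hl _

theorem zDet_yv (lam : ℝ) (i : Fin 4) :
    zDet lam (yv lam 0 i) (yv lam 1 i) (yv lam 2 i) (yv lam 3 i) =
      zDet lam (xv lam 0 i) (xv lam 1 i) (xv lam 2 i) (xv lam 3 i) := by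
  simp only [yv, cons_val', cons_val_fin_one, cons_val_zero, cons_val_one, cons_val,
    zDet_neg_neg]

theorem stmt_17_general (lam : ℝ) (hl : 0 < lam) :
    ∀ i : Fin 4,
      (zMat lam (xv lam) i).det = 0 ∧ (zMat lam (yv lam) i).det = 0 ∧
      (zMat lam (xv lam) i).rank ≤ 2 ∧ (zMat lam (yv lam) i).rank ≤ 2 := by
  intro i
  have hx : (zMat lam (xv lam) i).det = 0 := by
    rw [det_zMat, zDet_xv hl.ne', Complex.ofReal_zero]
  have hy : (zMat lam (yv lam) i).det = 0 := by
    rw [det_zMat, zDet_yv, zDet_xv hl.ne', Complex.ofReal_zero]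
  have hrank := Matrix.rank_lt_card_of_det_eq_zero hx
  have hrank' := Matrix.rank_lt_card_of_det_eq_zero hy
  rw [Fintype.card_fin] at hrank hrank'
  exact ⟨hx, hy, Nat.le_of_lt_succ hrank, Nat.le_of_lt_succ hrank'⟩

/-- every `zᵢ`, `i = 1,…,8`, has determinant zero, hence rank at most `2`. -/
theorem stmt_17 (lam : ℝ) (hl : 0 < lam) (hne : lam ≠ 1) :
    ∀ i : Fin 4,
      (zMat lam (xv lam) i).det = 0 ∧ (zMat lam (yv lam) i).det = 0 ∧
      (zMat lam (xv lam) i).rank ≤ 2 ∧ (zMat lam (yv lam) i).rank ≤ 2 :=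
  stmt_17_general lam hl
end
end

section
/- Let λ, μ > 0 with λμ = 1, λ ≠ 1. The normalized matrix A/Tr(A), where A = x̃x̃* + Σ_{i=1}^3 ỹᵢỹᵢ* with x = I₃, y₁ = λe₁₂+μe₂₁, y₂ = λe₂₃+μe₃₂, y₃ = μe₁₃+λe₃₁, has Schmidt number exactly 2: it lies in the cone generated by {z̃z̃* : z ∈ M₃, rank z ≤ 2} but not in the cone generated by {z̃z̃* : rank z ≤ 1}. -/
open Matrix BigOperators
open scoped ComplexOrder

noncomputable section

/-- membership in the cone `V_s` generated by `{z̃z̃* : rank z ≤ s}`. -/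
def InVs (s : ℕ) (A : Matrix (Fin 3 × Fin 3) (Fin 3 × Fin 3) ℂ) : Prop :=
  ∃ (N : ℕ) (z : Fin N → Matrix (Fin 3) (Fin 3) ℂ),
    (∀ k, Matrix.rank (z k) ≤ s) ∧ A = ∑ k, vv (z k)

/-! The four sign vectors `σ ∈ {±1}³` with `σ₁σ₂σ₃ = -1` satisfy `∑_σ σᵢ = 0` and
`∑_σ σᵢσⱼ = 4δᵢⱼ`, so the cross terms cancel in
`∑_σ vv (I + t ∑ σᵢ yᵢ) = 4 vv I + 4t² ∑ vv yᵢ`, and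
`A = ¼ ∑_σ vv (I + t ∑ σᵢ yᵢ) + (1 - t²) ∑ vv yᵢ`. As
`det (I + ∑ cᵢ yᵢ) = 1 - λμ ∑ cᵢ² + c₁c₂c₃ (λ³ + μ³)`, a root `t ∈ [0, 1]` of
`(λ³ + μ³) t³ + 3t² = 1` makes all four matrices `I + t ∑ σᵢ yᵢ` singular, hence of rank `≤ 2`;
the `yᵢ` are singular as well.

Conversely, the Choi-type maps `Φ[2,0,1]` and `Φ[2,1,0]` pair nonnegatively with `z̃z̃*` whenever
`rank z ≤ 1`: for `z = u wᵀ` this is `(∑ |uᵢwᵢ|)² ≤ 2 ∑ |uᵢwᵢ|² + ∑ |uᵢwᵢ₊₁|²` (indices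
mod 3). But their pairings with `A` are `3λ² - 3` and `3μ² - 3`, one of which is negative when
`λ ≠ 1`.
-/

namespace Matrix

variable {K : Type*} [Field K]

theorem rank_lt_card_of_det_eq_zero_s18 {n : Type*} [Fintype n] [DecidableEq n] {A : Matrix n n K}
    (h : A.det = 0) : A.rank < Fintype.card n := by
  obtain ⟨v, hv, hAv⟩ := exists_mulVec_eq_zero_iff.mpr h
  have hker : 0 < Module.finrank K (LinearMap.ker A.mulVecLin) :=
    Module.finrank_pos_iff.mpr ⟨⟨v, hAv⟩, 0, fun h => hv (congrArg Subtype.val h)⟩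
  have := LinearMap.finrank_range_add_finrank_ker A.mulVecLin
  rw [Module.finrank_fintype_fun_eq_card] at this
  rw [rank]
  omega

theorem exists_eq_vecMulVec_of_rank_le_one_s18 {m n : Type*} [Fintype n] [DecidableEq n]
    {A : Matrix m n K} (h : A.rank ≤ 1) : ∃ u w, A = vecMulVec u w := by
  obtain ⟨u, hu⟩ := (LinearMap.range A.mulVecLin).finrank_le_one_iff_isPrincipal.mp h
  have hcol : ∀ j, ∃ c : K, c • u = A *ᵥ Pi.single j 1 := fun j =>
    Submodule.mem_span_singleton.mp (hu ▸ ⟨Pi.single j 1, rfl⟩)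
  choose w hw using hcol
  refine ⟨u, w, ext fun i j => ?_⟩
  have hij := congrFun (hw j) i
  rw [mulVec_single_one, Pi.smul_apply, smul_eq_mul] at hij
  rw [vecMulVec_apply, mul_comm, hij]
  rfl

theorem rank_smul_le {m n : Type*} [Fintype n] [DecidableEq n] (c : K) (A : Matrix m n K) :
    (c • A).rank ≤ A.rank := by
  calc (c • A).rank = (A * (c • (1 : Matrix n n K))).rank := by
        rw [Matrix.mul_smul, Matrix.mul_one]
    _ ≤ A.rank := rank_mul_le_left _ _

theorem rank_le_two_of_det_eq_zero {A : Matrix (Fin 3) (Fin 3) K} (h : A.det = 0) : A.rank ≤ 2 :=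
  Nat.le_of_lt_succ (by simpa using rank_lt_card_of_det_eq_zero_s18 h)

end Matrix

theorem vv_ofReal_smul {m n : ℕ} (c : ℝ) (z : Matrix (Fin m) (Fin n) ℂ) :
    vv ((c : ℂ) • z) = ((c ^ 2 : ℝ) : ℂ) • vv z := by
  ext p q
  simp only [vv, vecz, Matrix.smul_apply, smul_eq_mul, star_mul', Complex.star_def,
    Complex.conj_ofReal]
  push_cast
  ring

theorem inVs_sum_vv {ι : Type*} [Fintype ι] {s : ℕ} (z : ι → Matrix (Fin 3) (Fin 3) ℂ)
    (hz : ∀ k, (z k).rank ≤ s) : InVs s (∑ k, vv (z k)) :=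
  ⟨Fintype.card ι, z ∘ (Fintype.equivFin ι).symm, fun _ => hz _,
    ((Fintype.equivFin ι).symm.sum_comp fun k => vv (z k)).symm⟩

theorem pair_add {m n : ℕ} (A B : Matrix (Fin n × Fin m) (Fin n × Fin m) ℂ)
    (φ : Matrix (Fin m) (Fin m) ℂ → Matrix (Fin n) (Fin n) ℂ) :
    pair (A + B) φ = pair A φ + pair B φ := by
  simp only [pair, Matrix.add_apply, mul_add, Finset.sum_add_distrib]

theorem pair_sum {m n : ℕ} {ι : Type*} (s : Finset ι)
    (A : ι → Matrix (Fin n × Fin m) (Fin n × Fin m) ℂ)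
    (φ : Matrix (Fin m) (Fin m) ℂ → Matrix (Fin n) (Fin n) ℂ) :
    pair (∑ k ∈ s, A k) φ = ∑ k ∈ s, pair (A k) φ :=
  map_sum (AddMonoidHom.mk' (pair · φ) (pair_add · · φ)) A s

namespace InVs

variable {s : ℕ} {A B : Matrix (Fin 3 × Fin 3) (Fin 3 × Fin 3) ℂ}

theorem add (hA : InVs s A) (hB : InVs s B) : InVs s (A + B) := by
  obtain ⟨N, z, hz, rfl⟩ := hA
  obtain ⟨M, w, hw, rfl⟩ := hB
  simpa [Fintype.sum_sum_type] using
    inVs_sum_vv (Sum.elim z w) (by rintro (k | k) <;> simp [hz, hw])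

theorem ofReal_smul (hA : InVs s A) {c : ℝ} (hc : 0 ≤ c) : InVs s ((c : ℂ) • A) := by
  obtain ⟨N, z, hz, rfl⟩ := hA
  refine ⟨N, fun k => (Real.sqrt c : ℂ) • z k, fun k => (rank_smul_le _ _).trans (hz k), ?_⟩
  simp only [vv_ofReal_smul, Real.sq_sqrt hc, Finset.smul_sum]

theorem re_pair_nonneg (hA : InVs s A) {φ : Matrix (Fin 3) (Fin 3) ℂ → Matrix (Fin 3) (Fin 3) ℂ}
    (hφ : ∀ z : Matrix (Fin 3) (Fin 3) ℂ, z.rank ≤ s → 0 ≤ (pair (vv z) φ).re) :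
    0 ≤ (pair A φ).re := by
  obtain ⟨N, z, hz, rfl⟩ := hA
  rw [pair_sum, Complex.re_sum]
  exact Finset.sum_nonneg fun k _ => hφ _ (hz k)

end InVs

theorem pair_vv_Phi (a b c : ℝ) (z : Matrix (Fin 3) (Fin 3) ℂ) :
    pair (vv z) (Phi a b c) = ((∑ i, (a * ‖z i i‖ ^ 2 + b * ‖z (i + 1) i‖ ^ 2
      + c * ‖z i (i + 1)‖ ^ 2) - ‖z.trace‖ ^ 2 : ℝ) : ℂ) := by
  simp only [pair, Phi, diagonal, single, of_apply, mul_ite, mul_one, mul_zero, Matrix.sub_apply,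
    vv, vecz, RCLike.star_def, Fin.sum_univ_three, ↓reduceIte, cons_val_zero, zero_ne_one, zero_sub,
    neg_mul, ite_mul, one_mul, zero_mul, Fin.reduceEq, one_ne_zero, cons_val_one, cons_val,
    and_true, and_false, add_zero, neg_zero, zero_add, sub_zero, sub_self, Fin.isValue,
    Fin.reduceAdd, trace, diag_apply]
  push_cast
  simp only [← Complex.mul_conj', map_add]
  ring

theorem pair_vv_transpose_Phi (a b c : ℝ) (z : Matrix (Fin 3) (Fin 3) ℂ) :
    pair (vv zᵀ) (Phi a b c) = pair (vv z) (Phi a c b) := by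
  rw [pair_vv_Phi, pair_vv_Phi, trace_transpose]
  congr 3
  funext i
  simp only [transpose_apply]
  ring

theorem sq_dotProduct_le_sum_cyclic (x y : Fin 3 → ℝ) :
    (x ⬝ᵥ y) ^ 2 ≤ ∑ i, (2 * (x i * y i) ^ 2 + (x i * y (i + 1)) ^ 2) := by
  simp only [dotProduct, Fin.sum_univ_three, Fin.isValue, zero_add, Fin.reduceAdd]
  nlinarith [sq_nonneg (x 0 * y 0 - x 1 * y 1), sq_nonneg (x 1 * y 1 - x 2 * y 2),
    sq_nonneg (x 0 * y 0 - x 2 * y 2), sq_nonneg (x 0 * y 1 - x 1 * y 0),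
    sq_nonneg (x 1 * y 2 - x 2 * y 1), sq_nonneg (x 2 * y 0 - x 0 * y 2),
    sq_nonneg (x 0 * y 1 - x 1 * y 2), sq_nonneg (x 1 * y 2 - x 2 * y 0),
    sq_nonneg (x 2 * y 0 - x 0 * y 1)]

theorem re_pair_vv_Phi_two_zero_one_nonneg {z : Matrix (Fin 3) (Fin 3) ℂ} (hz : z.rank ≤ 1) :
    0 ≤ (pair (vv z) (Phi 2 0 1)).re := by
  obtain ⟨u, w, rfl⟩ := exists_eq_vecMulVec_of_rank_le_one_s18 hz
  rw [pair_vv_Phi, Complex.ofReal_re, sub_nonneg]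
  have htrace : ‖(vecMulVec u w).trace‖ ≤ (‖u ·‖) ⬝ᵥ (‖w ·‖) :=
    (norm_sum_le _ _).trans_eq (by simp [dotProduct, vecMulVec_apply])
  calc ‖(vecMulVec u w).trace‖ ^ 2 ≤ ((‖u ·‖) ⬝ᵥ (‖w ·‖)) ^ 2 := by gcongr
    _ ≤ ∑ i, (2 * (‖u i‖ * ‖w i‖) ^ 2 + (‖u i‖ * ‖w (i + 1)‖) ^ 2) :=
      sq_dotProduct_le_sum_cyclic _ _
    _ = _ := by simp [vecMulVec_apply]

theorem re_pair_vv_Phi_two_one_zero_nonneg {z : Matrix (Fin 3) (Fin 3) ℂ} (hz : z.rank ≤ 1) :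
    0 ≤ (pair (vv z) (Phi 2 1 0)).re := by
  rw [← pair_vv_transpose_Phi]
  exact re_pair_vv_Phi_two_zero_one_nonneg (by rwa [rank_transpose])

theorem pair_Amat_Phi (lam mu a b c : ℝ) :
    pair (Amat lam mu) (Phi a b c) =
      ((3 * a - 9 + 3 * b * mu ^ 2 + 3 * c * lam ^ 2 : ℝ) : ℂ) := by
  simp only [Amat, pair_add, pair_sum, pair_vv_Phi]
  simp only [trace, diag_apply, one_apply, yMat, Fin.sum_univ_three, Fin.isValue, Fin.reduceAdd,
    cons_val_zero, cons_val_one, cons_val, cons_val', cons_val_fin_one, of_apply, ↓reduceIte,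
    Fin.reduceEq, norm_one, norm_zero, Complex.norm_real, Real.norm_eq_abs, sq_abs, zero_add,
    one_add_one_eq_two, two_add_one_eq_three, Complex.norm_ofNat]
  push_cast
  ring

theorem trace_Amat (lam mu : ℝ) :
    (Amat lam mu).trace = ((3 + 3 * lam ^ 2 + 3 * mu ^ 2 : ℝ) : ℂ) := by
  simp only [trace, Amat, yMat, Fin.sum_univ_three, Fin.isValue, cons_val_zero, cons_val_one,
    cons_val, diag_apply, Matrix.add_apply, vv, vecz, one_apply, RCLike.star_def,
    MonoidWithZeroHom.map_ite_one_zero, mul_ite, mul_one, mul_zero, of_apply, cons_val',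
    cons_val_fin_one, Complex.mul_conj, Fintype.sum_prod_type, ↓reduceIte, map_zero,
    Complex.ofReal_zero, add_zero, one_ne_zero, Complex.normSq_ofReal, zero_add, Fin.reduceEq,
    zero_ne_one]
  push_cast
  ring

def oddSigns : Fin 4 → Fin 3 → ℝ := ![![-1, -1, -1], ![-1, 1, 1], ![1, -1, 1], ![1, 1, -1]]

theorem sum_vv_add_oddSigns {m n : ℕ} (x₀ : Matrix (Fin m) (Fin n) ℂ)
    (x : Fin 3 → Matrix (Fin m) (Fin n) ℂ) (t : ℝ) :
    ∑ k, vv (x₀ + ∑ i, ((t * oddSigns k i : ℝ) : ℂ) • x i)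
      = (4 : ℂ) • vv x₀ + ((4 * t ^ 2 : ℝ) : ℂ) • ∑ i, vv (x i) := by
  ext p q
  simp only [oddSigns, cons_val', cons_val_fin_one, Fin.sum_univ_three, Fin.sum_univ_four,
    Fin.isValue, cons_val_zero, cons_val_one, cons_val, Matrix.sum_apply, vv, vecz,
    Matrix.add_apply, Matrix.smul_apply, smul_eq_mul, star_add, RCLike.star_def, star_mul',
    Complex.conj_ofReal]
  push_cast
  ring

theorem Amat_eq_smul_sum_vv_add (lam mu t : ℝ) :
    Amat lam mu =
      ((1 / 4 : ℝ) : ℂ) • ∑ k, vv (1 + ∑ i, ((t * oddSigns k i : ℝ) : ℂ) • yMat lam mu i)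
        + ((1 - t ^ 2 : ℝ) : ℂ) • ∑ i, vv (yMat lam mu i) := by
  rw [sum_vv_add_oddSigns, Amat]
  push_cast
  module

theorem det_one_add_sum_smul_yMat (lam mu : ℝ) (c : Fin 3 → ℝ) :
    (1 + ∑ i, (c i : ℂ) • yMat lam mu i).det = ((1 - (c 0 ^ 2 + c 1 ^ 2 + c 2 ^ 2) * (lam * mu)
      + c 0 * c 1 * c 2 * (lam ^ 3 + mu ^ 3) : ℝ) : ℂ) := by
  simp only [det_fin_three, Matrix.add_apply, one_apply, Fin.sum_univ_three, Matrix.smul_apply,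
    smul_eq_mul, yMat, Fin.isValue, cons_val_zero, cons_val_one, cons_val, cons_val',
    cons_val_fin_one, of_apply, ↓reduceIte, Fin.reduceEq]
  push_cast
  ring

theorem det_yMat (lam mu : ℝ) (i : Fin 3) : (yMat lam mu i).det = 0 := by
  fin_cases i <;> simp [yMat, det_fin_three]

theorem exists_cubic_root_mem_Icc (p : ℝ) (hp : 0 ≤ p) :
    ∃ t ∈ Set.Icc (0 : ℝ) 1, p * t ^ 3 + 3 * t ^ 2 = 1 :=
  intermediate_value_Icc zero_le_one (by fun_prop) ⟨by simp, by simp; linarith⟩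

theorem inVs_two_Amat {lam mu : ℝ} (hl : 0 < lam) (hm : 0 < mu) (hlm : lam * mu = 1) :
    InVs 2 (Amat lam mu) := by
  obtain ⟨t, ⟨ht₀, ht₁⟩, ht⟩ := exists_cubic_root_mem_Icc (lam ^ 3 + mu ^ 3) (by positivity)
  rw [Amat_eq_smul_sum_vv_add lam mu t]
  refine (InVs.ofReal_smul (inVs_sum_vv _ fun k => ?_) (by norm_num)).add
    (InVs.ofReal_smul (inVs_sum_vv _ fun i => rank_le_two_of_det_eq_zero (det_yMat lam mu i))
      (by nlinarith))
  refine rank_le_two_of_det_eq_zero ?_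
  rw [det_one_add_sum_smul_yMat, Complex.ofReal_eq_zero, hlm]
  fin_cases k <;>
    simp only [oddSigns, Fin.zero_eta, Fin.mk_one, Fin.reduceFinMk, Fin.isValue, cons_val',
      cons_val_zero, cons_val_fin_one, cons_val_one, cons_val, mul_neg, mul_one, neg_mul, neg_neg,
      even_two, Even.neg_pow] <;>
    linear_combination -ht

/-- the state `A / Tr A` has Schmidt number exactly `2`: it lies in the cone
generated by `z̃z̃*` with `rank z ≤ 2` but not in the one with `rank z ≤ 1`. -/
theorem stmt_18 (lam mu : ℝ) (hl : 0 < lam) (hm : 0 < mu) (hlm : lam * mu = 1)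
    (hne : lam ≠ 1) :
    InVs 2 ((Amat lam mu).trace⁻¹ • Amat lam mu) ∧
    ¬ InVs 1 ((Amat lam mu).trace⁻¹ • Amat lam mu) := by
  have hT : 0 < 3 + 3 * lam ^ 2 + 3 * mu ^ 2 := by positivity
  rw [trace_Amat, ← Complex.ofReal_inv]
  refine ⟨(inVs_two_Amat hl hm hlm).ofReal_smul (inv_nonneg.mpr hT.le), fun h => ?_⟩
  have hA : InVs 1 (Amat lam mu) := by
    have := h.ofReal_smul hT.le
    rwa [smul_smul, ← Complex.ofReal_mul, mul_inv_cancel₀ hT.ne', Complex.ofReal_one,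
      one_smul] at this
  rcases hne.lt_or_gt with hlt | hgt
  · have := hA.re_pair_nonneg fun _ => re_pair_vv_Phi_two_zero_one_nonneg
    rw [pair_Amat_Phi, Complex.ofReal_re] at this
    nlinarith
  · have := hA.re_pair_nonneg fun _ => re_pair_vv_Phi_two_one_zero_nonneg
    rw [pair_Amat_Phi, Complex.ofReal_re] at this
    nlinarith
end
end
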